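/- arXiv:2603.20826 — 3 statements merged into one kernel-verified Lean document; each statement's English description precedes it below -/
import Mathlib

section
/- Let V be a real Hilbert space, λ > 0, and consider T rounds of the CoRectron algorithm: A_0 = λI, ζ_0 = 0, and for each t = 1,…,T, ŵ_t = -A_{t-1}^{-1}ζ_{t-1}; the learner is given a nonempty set X_t ⊆ V, picks x̂_t ∈ X_t satisfying ⟨ŵ_t, x̂_t⟩ ≥ ⟨ŵ_t, x⟩ for all x ∈ X_t, observes x_t ∈ X_t, sets g_t = x̂_t - x_t, and updates A_t = A_{t-1} + g_t ⊗ g_t, ζ_t = ζ_{t-1} + g_t. Then for every u ∈ V, the regret R_T(u) = Σ_{t=1}^T ⟨u, x_t - x̂_t⟩ = -⟨u, ζ_T⟩ satisfies R_T(u) ≤ ‖u‖_{A_T} · √(log det(I_T + λ^{-1} K_T)). -/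
/-!
By Cauchy–Schwarz for the inner product `⟪·, A_T ·⟫`, the regret `-⟪u, ζ_T⟫` is at most
`‖u‖_{A_T} √P_T` for the potential `P_t = ⟪ζ_t, A_t⁻¹ ζ_t⟫`. By Sherman–Morrison, the update
`A ↦ A + g ⊗ g`, `ζ ↦ ζ + g` raises the potential by `(2α + β - α²) / (1 + β)`, where
`α = ⟪g, A⁻¹ ζ⟫` and `β = ⟪g, A⁻¹ g⟫`. Since `ŵ_t = -A⁻¹ ζ` and `x̂_t` maximises `⟪ŵ_t, ·⟫` over a
set containing `x_t`, we have `α ≤ 0`, so each round adds at most `β / (1 + β) ≤ log (1 + β)`.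
Finally `∏ₜ (1 + β_t) = det (I + λ⁻¹ K_T)`: bordering `I + λ⁻¹ K_t` by `g_t` multiplies its
determinant by the Schur complement `1 + β_t`.
-/

open scoped RealInnerProductSpace

/-- The rank-one operator `a ⊗ a : v ↦ ⟪a, v⟫ • a` on a real inner product space. -/
noncomputable def rankOne {V : Type*} [NormedAddCommGroup V] [InnerProductSpace ℝ V]
    (a : V) : V →L[ℝ] V :=
  (innerSL ℝ a).smulRight a

section

variable {V : Type*} [NormedAddCommGroup V] [InnerProductSpace ℝ V]

lemma rankOne_apply (a v : V) : rankOne a v = ⟪a, v⟫ • a := rfl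

lemma isPositive_rankOne (a : V) : (rankOne a).IsPositive :=
  InnerProductSpace.isPositive_rankOne_self a

namespace ContinuousLinearMap

variable {A : V →L[ℝ] V}

lemma apply_ring_inverse_apply (hu : IsUnit A) (x : V) : A (Ring.inverse A x) = x := by
  rw [← mul_apply_eq_comp, Ring.mul_inverse_cancel A hu, one_apply_eq_self]

lemma ring_inverse_apply_apply (hu : IsUnit A) (x : V) : Ring.inverse A (A x) = x := by
  rw [← mul_apply_eq_comp, Ring.inverse_mul_cancel A hu, one_apply_eq_self]

lemma IsPositive.ring_inverse (hA : A.IsPositive) (hu : IsUnit A) :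
    (Ring.inverse A).IsPositive := by
  refine (isPositive_iff _).2 ⟨fun x y => ?_, fun x => ?_⟩
  · simp only [coe_coe]
    conv_lhs => rw [← apply_ring_inverse_apply hu y]
    conv_rhs => rw [← apply_ring_inverse_apply hu x]
    rw [hA.inner_left_eq_inner_right, real_inner_comm]
  · simpa only [apply_ring_inverse_apply hu] using hA.inner_nonneg_right (Ring.inverse A x)

lemma IsPositive.inner_sq_le (hA : A.IsPositive) (u w : V) :
    ⟪u, A w⟫ ^ 2 ≤ ⟪u, A u⟫ * ⟪w, A w⟫ := by
  have hsymm : ⟪w, A u⟫ = ⟪u, A w⟫ := by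
    rw [← hA.inner_left_eq_inner_right, real_inner_comm]
  have hquad : ∀ x : ℝ, 0 ≤ ⟪w, A w⟫ * (x * x) + 2 * ⟪u, A w⟫ * x + ⟪u, A u⟫ := fun x => by
    have := hA.inner_nonneg_right (u + x • w)
    simp only [map_add, map_smul, inner_add_left, inner_add_right, real_inner_smul_left,
      real_inner_smul_right, hsymm] at this
    linarith
  have := discrim_le_zero hquad
  rw [discrim] at this
  linarith

lemma IsPositive.inner_sq_le_ring_inverse (hA : A.IsPositive) (hu : IsUnit A) (u z : V) :
    ⟪u, z⟫ ^ 2 ≤ ⟪u, A u⟫ * ⟪z, Ring.inverse A z⟫ := by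
  simpa only [apply_ring_inverse_apply hu, real_inner_comm z] using
    hA.inner_sq_le u (Ring.inverse A z)

end ContinuousLinearMap

open ContinuousLinearMap

section RankOneUpdate

variable {A : V →L[ℝ] V}

/-- Sherman–Morrison formula. -/
lemma isUnit_add_rankOne_and_ring_inverse_eq (hu : IsUnit A)
    (hsymm : (Ring.inverse A).IsSymmetric) {a : V}
    (ha : 1 + ⟪a, Ring.inverse A a⟫ ≠ 0) :
    IsUnit (A + rankOne a) ∧ Ring.inverse (A + rankOne a) =
      Ring.inverse A - (1 + ⟪a, Ring.inverse A a⟫)⁻¹ • rankOne (Ring.inverse A a) := by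
  have hB : ∀ x y, ⟪Ring.inverse A x, y⟫ = ⟪x, Ring.inverse A y⟫ := hsymm
  let u : (V →L[ℝ] V)ˣ :=
    { val := A + rankOne a
      inv := Ring.inverse A - (1 + ⟪a, Ring.inverse A a⟫)⁻¹ • rankOne (Ring.inverse A a)
      val_inv := by
        ext v
        simp only [mul_apply_eq_comp, add_apply, sub_apply, smul_apply,
          rankOne_apply, map_sub, map_smul, apply_ring_inverse_apply hu, one_apply_eq_self,
          ← hB a v]
        match_scalars <;> field_simp
        ring
      inv_val := by
        ext v
        simp only [mul_apply_eq_comp, add_apply, sub_apply, smul_apply,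
          rankOne_apply, map_add, map_smul, ring_inverse_apply_apply hu, one_apply_eq_self, hB a]
        match_scalars <;> field_simp
        ring }
  exact ⟨u.isUnit, Ring.inverse_unit u⟩

lemma inner_ring_inverse_add_rankOne (hu : IsUnit A) (hsymm : (Ring.inverse A).IsSymmetric)
    {a : V} (ha : 1 + ⟪a, Ring.inverse A a⟫ ≠ 0) (z : V) :
    ⟪z + a, Ring.inverse (A + rankOne a) (z + a)⟫ = ⟪z, Ring.inverse A z⟫ +
      (2 * ⟪a, Ring.inverse A z⟫ + ⟪a, Ring.inverse A a⟫ - ⟪a, Ring.inverse A z⟫ ^ 2) /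
        (1 + ⟪a, Ring.inverse A a⟫) := by
  have hB : ∀ x y, ⟪Ring.inverse A x, y⟫ = ⟪x, Ring.inverse A y⟫ := hsymm
  have hza : ⟪z, Ring.inverse A a⟫ = ⟪a, Ring.inverse A z⟫ := by
    rw [← hB, real_inner_comm]
  rw [(isUnit_add_rankOne_and_ring_inverse_eq hu hsymm ha).2]
  simp only [sub_apply, smul_apply, rankOne_apply, map_add, inner_add_left, inner_add_right,
    inner_sub_right, real_inner_smul_right, hB, hza]
  field_simp
  ring

lemma inner_ring_inverse_add_rankOne_le (hu : IsUnit A) (hB : (Ring.inverse A).IsPositive)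
    {z a : V} (hα : ⟪a, Ring.inverse A z⟫ ≤ 0) :
    ⟪z + a, Ring.inverse (A + rankOne a) (z + a)⟫ ≤
      ⟪z, Ring.inverse A z⟫ + Real.log (1 + ⟪a, Ring.inverse A a⟫) := by
  have hβ : 0 < 1 + ⟪a, Ring.inverse A a⟫ := by linarith [hB.inner_nonneg_right a]
  rw [inner_ring_inverse_add_rankOne hu hB.isSymmetric hβ.ne']
  generalize ⟪a, Ring.inverse A z⟫ = α at hα ⊢
  generalize ⟪a, Ring.inverse A a⟫ = β at hβ ⊢
  gcongr _ + ?_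
  calc (2 * α + β - α ^ 2) / (1 + β) ≤ β / (1 + β) := by gcongr; nlinarith
    _ = 1 - (1 + β)⁻¹ := by field_simp; ring
    _ ≤ Real.log (1 + β) := Real.one_sub_inv_le_log_of_pos hβ

end RankOneUpdate

open Finset Matrix

section Covariance

variable (lam : ℝ) (g : ℕ → V)

noncomputable def covariance (n : ℕ) : V →L[ℝ] V :=
  lam • 1 + ∑ i ∈ range n, rankOne (g i)

noncomputable def regularizedGram (n : ℕ) : Matrix (Fin n) (Fin n) ℝ :=
  1 + lam⁻¹ • gram ℝ fun i : Fin n => g i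

variable {lam g}

lemma regularizedGram_apply (n : ℕ) (i j : Fin n) :
    regularizedGram lam g n i j = (1 : Matrix (Fin n) (Fin n) ℝ) i j + lam⁻¹ * ⟪g i, g j⟫ := rfl

lemma covariance_apply (n : ℕ) (v : V) :
    covariance lam g n v = lam • v + ∑ i ∈ range n, ⟪g i, v⟫ • g i := by
  simp [covariance, rankOne_apply]

lemma covariance_succ (n : ℕ) :
    covariance lam g (n + 1) = covariance lam g n + rankOne (g n) := by
  rw [covariance, covariance, sum_range_succ, add_assoc]

lemma isPositive_covariance (hlam : 0 ≤ lam) (n : ℕ) : (covariance lam g n).IsPositive :=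
  (ContinuousLinearMap.isPositive_one.smul_of_nonneg hlam).add
    (isPositive_sum _ fun i _ => isPositive_rankOne (g i))

lemma isUnit_covariance (hlam : 0 < lam) (n : ℕ) : IsUnit (covariance lam g n) := by
  induction n with
  | zero =>
    simpa [covariance, Algebra.algebraMap_eq_smul_one] using
      (isUnit_iff_ne_zero.2 hlam.ne').map (algebraMap ℝ (V →L[ℝ] V))
  | succ n ih =>
    have hB := (isPositive_covariance hlam.le n).ring_inverse ih
    rw [covariance_succ]
    exact (isUnit_add_rankOne_and_ring_inverse_eq ih hB.isSymmetric
      (by linarith [hB.inner_nonneg_right (g n)])).1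

lemma inner_sum_ring_inverse_covariance_le (hlam : 0 < lam) (N : ℕ)
    (hopt : ∀ n < N, ⟪g n, Ring.inverse (covariance lam g n) (∑ i ∈ range n, g i)⟫ ≤ 0) :
    ⟪∑ i ∈ range N, g i, Ring.inverse (covariance lam g N) (∑ i ∈ range N, g i)⟫ ≤
      ∑ n ∈ range N, Real.log (1 + ⟪g n, Ring.inverse (covariance lam g n) (g n)⟫) := by
  induction N with
  | zero => simp
  | succ N ih =>
    have hu := isUnit_covariance (g := g) hlam N
    have hstep := inner_ring_inverse_add_rankOne_le hu
      ((isPositive_covariance hlam.le N).ring_inverse hu) (hopt N N.lt_add_one)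
    rw [sum_range_succ, sum_range_succ, covariance_succ]
    linarith [ih fun n hn => hopt n (hn.trans N.lt_add_one)]

lemma regularizedGram_mulVec_apply {n : ℕ} (c : Fin n → ℝ) (i : Fin n) :
    (regularizedGram lam g n *ᵥ c) i = c i + lam⁻¹ * ∑ j : Fin n, ⟪g i, g j⟫ * c j := by
  simp only [regularizedGram, add_mulVec, one_mulVec, smul_mulVec, Pi.add_apply, Pi.smul_apply,
    smul_eq_mul]
  rfl

lemma ring_inverse_covariance_apply (hlam : 0 < lam) {n : ℕ} {x : V} {c : Fin n → ℝ}
    (hc : regularizedGram lam g n *ᵥ c = fun i : Fin n => lam⁻¹ * ⟪g i, x⟫) :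
    Ring.inverse (covariance lam g n) x = lam⁻¹ • (x - ∑ i, c i • g i) := by
  have hcoord : ∀ i : Fin n, ⟪g i, lam⁻¹ • (x - ∑ j, c j • g j)⟫ = c i := fun i => by
    have := congrFun hc i
    rw [regularizedGram_mulVec_apply] at this
    simp only [real_inner_smul_right, inner_sub_right, inner_sum, mul_comm (c _)]
    linear_combination -this
  rw [← ring_inverse_apply_apply (isUnit_covariance hlam n) (lam⁻¹ • _)]
  congr 1
  rw [covariance_apply, ← Fin.sum_univ_eq_sum_range (fun i => ⟪g i, _⟫ • g i)]
  simp only [hcoord, smul_smul, mul_inv_cancel₀ hlam.ne', one_smul, sub_add_cancel]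

lemma posDef_regularizedGram (hlam : 0 < lam) (n : ℕ) : (regularizedGram lam g n).PosDef :=
  PosDef.one.add_posSemidef ((posSemidef_gram ℝ _).smul (inv_nonneg.2 hlam.le))

lemma det_regularizedGram_succ (hlam : 0 < lam) (n : ℕ) :
    (regularizedGram lam g (n + 1)).det =
      (regularizedGram lam g n).det * (1 + ⟪g n, Ring.inverse (covariance lam g n) (g n)⟫) := by
  set M := regularizedGram lam g n
  have hM : IsUnit M := (posDef_regularizedGram hlam n).isUnit
  let := hM.invertible
  set k : Fin n → ℝ := fun i => lam⁻¹ * ⟪g i, g n⟫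
  have hblocks : (regularizedGram lam g (n + 1)).submatrix finSumFinEquiv finSumFinEquiv =
      fromBlocks M (of fun i _ => k i) (of fun _ j => k j)
        (of fun _ _ => 1 + lam⁻¹ * ⟪g n, g n⟫) := by
    ext (i | i) (j | j) <;>
      simp [regularizedGram_apply, M, k, one_apply, Fin.ext_iff, real_inner_comm] <;> omega
  have hsolve := ring_inverse_covariance_apply hlam (x := g n) (c := M⁻¹ *ᵥ k) (by
    rw [mulVec_mulVec, mul_nonsing_inv M ((isUnit_iff_isUnit_det M).1 hM), one_mulVec])
  rw [← det_submatrix_equiv_self finSumFinEquiv, hblocks, det_fromBlocks₁₁, det_fin_one, hsolve,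
    invOf_eq_nonsing_inv]
  congr 1
  have hcol : ∀ i, (M⁻¹ * of fun i (_ : Fin 1) => k i) i 0 = (M⁻¹ *ᵥ k) i := fun i => rfl
  rw [Matrix.sub_apply, Matrix.mul_assoc, Matrix.mul_apply]
  simp only [of_apply, hcol, inner_sub_right, inner_sum, real_inner_smul_right, mul_sub, mul_sum]
  have hterm : ∀ i, k i * (M⁻¹ *ᵥ k) i = lam⁻¹ * ((M⁻¹ *ᵥ k) i * ⟪g n, g i⟫) := fun i => by
    simp only [k, real_inner_comm (g n)]; ring
  simp only [hterm]
  ring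

lemma det_regularizedGram (hlam : 0 < lam) (n : ℕ) :
    (regularizedGram lam g n).det =
      ∏ i ∈ range n, (1 + ⟪g i, Ring.inverse (covariance lam g i) (g i)⟫) := by
  induction n with
  | zero => exact det_isEmpty
  | succ n ih => rw [det_regularizedGram_succ hlam, ih, prod_range_succ]

lemma neg_inner_sum_le_sqrt_mul_sqrt_log_det (hlam : 0 < lam) (N : ℕ)
    (hopt : ∀ n < N, ⟪g n, Ring.inverse (covariance lam g n) (∑ i ∈ range n, g i)⟫ ≤ 0) (u : V) :
    -⟪u, ∑ i ∈ range N, g i⟫ ≤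
      √⟪u, covariance lam g N u⟫ * √(Real.log (regularizedGram lam g N).det) := by
  have hA := isPositive_covariance (g := g) hlam.le N
  have hpos : ∀ n, (Ring.inverse (covariance lam g n)).IsPositive := fun n =>
    (isPositive_covariance hlam.le n).ring_inverse (isUnit_covariance hlam n)
  have hlog : Real.log (regularizedGram lam g N).det =
      ∑ n ∈ range N, Real.log (1 + ⟪g n, Ring.inverse (covariance lam g n) (g n)⟫) := by
    rw [det_regularizedGram hlam, Real.log_prod]
    exact fun n _ => by linarith [(hpos n).inner_nonneg_right (g n)]
  have hcs := hA.inner_sq_le_ring_inverse (isUnit_covariance hlam N) u (∑ i ∈ range N, g i)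
  rw [← Real.sqrt_mul (hA.inner_nonneg_right u), hlog]
  refine (neg_le_abs _).trans (Real.abs_le_sqrt (hcs.trans ?_))
  exact mul_le_mul_of_nonneg_left (inner_sum_ring_inverse_covariance_le hlam N hopt)
    (hA.inner_nonneg_right u)

end Covariance

end

theorem corectron_main_regret_bound_general
    {V : Type*} [NormedAddCommGroup V] [InnerProductSpace ℝ V]
    (T : ℕ) (lam : ℝ) (hlam : 0 < lam)
    (X : Fin T → Set V)
    (xhat xobs g : Fin T → V)
    (A : ℕ → (V →L[ℝ] V)) (ζ : ℕ → V) (what : Fin T → V)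
    (hA0 : A 0 = lam • (1 : V →L[ℝ] V)) (hζ0 : ζ 0 = 0)
    (hwhat : ∀ t : Fin T, what t = -(Ring.inverse (A t)) (ζ t))
    (hxhat_opt : ∀ t : Fin T, ∀ y ∈ X t, ⟪what t, y⟫ ≤ ⟪what t, xhat t⟫)
    (hxobs_mem : ∀ t, xobs t ∈ X t)
    (hg : ∀ t, g t = xhat t - xobs t)
    (hA : ∀ t : Fin T, A ((t : ℕ) + 1) = A t + rankOne (g t))
    (hζ : ∀ t : Fin T, ζ ((t : ℕ) + 1) = ζ t + g t)
    (u : V) (K : Matrix (Fin T) (Fin T) ℝ)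
    (hK : ∀ i j, K i j = ⟪g i, g j⟫) :
    (∑ t, ⟪u, xobs t - xhat t⟫) = -⟪u, ζ T⟫ ∧
    (∑ t, ⟪u, xobs t - xhat t⟫) ≤
      Real.sqrt ⟪u, (A T) u⟫ * Real.sqrt (Real.log (1 + lam⁻¹ • K).det) := by
  set G : ℕ → V := fun n => if h : n < T then g ⟨n, h⟩ else 0
  have hG : ∀ t : Fin T, G t = g t := fun t => dif_pos t.isLt
  have hζG : ∀ n ≤ T, ζ n = ∑ i ∈ Finset.range n, G i := fun n hn =>
    (Finset.sum_range_induction G ζ hζ0 n fun k hk => by rw [hζ ⟨k, by omega⟩, ← hG]).symm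
  have hAG : ∀ n ≤ T, A n = covariance lam G n := fun n hn => by
    rw [covariance, Finset.sum_range_induction (fun i => rankOne (G i)) (fun k => A k - lam • 1)
      (by rw [hA0, sub_self]) n fun k hk => by rw [hA ⟨k, by omega⟩, ← hG]; abel]
    abel
  have hregret : ∑ t, ⟪u, xobs t - xhat t⟫ = -⟪u, ζ T⟫ := by
    rw [hζG T le_rfl, ← Fin.sum_univ_eq_sum_range, inner_sum, ← Finset.sum_neg_distrib]
    simp only [hG, hg, ← inner_neg_right, neg_sub]
  have hopt : ∀ n < T,
      ⟪G n, Ring.inverse (covariance lam G n) (∑ i ∈ Finset.range n, G i)⟫ ≤ 0 := fun n hn => by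
    have := hxhat_opt ⟨n, hn⟩ _ (hxobs_mem ⟨n, hn⟩)
    rw [hwhat, hAG n hn.le, hζG n hn.le] at this
    rw [hG ⟨n, hn⟩, hg, real_inner_comm, inner_sub_right]
    simp only [inner_neg_left] at this
    linarith
  have hgram : 1 + lam⁻¹ • K = regularizedGram lam G T := by
    ext i j
    rw [regularizedGram_apply, Matrix.add_apply, Matrix.smul_apply, hK, hG, hG, smul_eq_mul]
  refine ⟨hregret, ?_⟩
  rw [hregret, hAG T le_rfl, hζG T le_rfl, hgram]
  exact neg_inner_sum_le_sqrt_mul_sqrt_log_det hlam T hopt u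

/-- Main regret bound for CoRectron: the regret `R_T(u) = Σ_t ⟪u, x_t - x̂_t⟫ = -⟪u, ζ_T⟫`
is at most `‖u‖_{A_T} √(log det (I_T + λ⁻¹ K_T))`. -/
theorem corectron_main_regret_bound
    {V : Type*} [NormedAddCommGroup V] [InnerProductSpace ℝ V] [CompleteSpace V]
    (T : ℕ) (lam : ℝ) (hlam : 0 < lam)
    (X : Fin T → Set V) (hXne : ∀ t, (X t).Nonempty)
    (xhat xobs g : Fin T → V)
    (A : ℕ → (V →L[ℝ] V)) (ζ : ℕ → V) (what : Fin T → V)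
    (hA0 : A 0 = lam • (1 : V →L[ℝ] V)) (hζ0 : ζ 0 = 0)
    (hwhat : ∀ t : Fin T, what t = -(Ring.inverse (A t)) (ζ t))
    (hxhat_mem : ∀ t, xhat t ∈ X t)
    (hxhat_opt : ∀ t : Fin T, ∀ y ∈ X t, ⟪what t, y⟫ ≤ ⟪what t, xhat t⟫)
    (hxobs_mem : ∀ t, xobs t ∈ X t)
    (hg : ∀ t, g t = xhat t - xobs t)
    (hA : ∀ t : Fin T, A ((t : ℕ) + 1) = A t + rankOne (g t))
    (hζ : ∀ t : Fin T, ζ ((t : ℕ) + 1) = ζ t + g t)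
    (u : V) (K : Matrix (Fin T) (Fin T) ℝ)
    (hK : ∀ i j, K i j = ⟪g i, g j⟫) :
    (∑ t, ⟪u, xobs t - xhat t⟫) = -⟪u, ζ T⟫ ∧
    (∑ t, ⟪u, xobs t - xhat t⟫) ≤
      Real.sqrt ⟪u, (A T) u⟫ * Real.sqrt (Real.log (1 + lam⁻¹ • K).det) :=
  corectron_main_regret_bound_general T lam hlam X xhat xobs g A ζ what hA0 hζ0 hwhat hxhat_opt
    hxobs_mem hg hA hζ u K hK
end

section
/- (Log-determinant vs. effective dimension) Let K ∈ ℝ^{T×T} be a positive semidefinite symmetric matrix and λ > 0. Define the effective dimension d_eff(λ) = tr(K(K + λ·I_T)^{-1}) and let ‖K‖_op denote the operator norm (largest eigenvalue) of K. Then log det(I_T + λ^{-1} K) ≤ d_eff(λ) · (1 + log(1 + λ^{-1}‖K‖_op)). -/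
open scoped Matrix.Norms.L2Operator
open Matrix

/-! Diagonalise `K` by the continuous functional calculus: `1 + λ⁻¹ K` and `K (K + λ)⁻¹` are
`cfc` images of `K`, so the log-determinant and the trace become sums over the eigenvalues
`μᵢ ∈ [0, ‖K‖]` of `log (1 + μᵢ/λ)` and `μᵢ/(μᵢ + λ)`. The claim then holds termwise: with
`x = μ/λ`, `(1 + x) log (1 + x) ≤ x + x log (1 + ‖K‖/λ)` since `log (1 + x)` is bounded both by
`x` and by `log (1 + ‖K‖/λ)`. -/

theorem Real.log_one_add_inv_mul_le {lam s M : ℝ} (hlam : 0 < lam) (hs : 0 ≤ s) (hsM : s ≤ M) :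
    Real.log (1 + lam⁻¹ * s) ≤ s / (s + lam) * (1 + Real.log (1 + lam⁻¹ * M)) := by
  have hx : 0 ≤ lam⁻¹ * s := by positivity
  have hlog_le_self : Real.log (1 + lam⁻¹ * s) ≤ lam⁻¹ * s := by
    linarith [Real.log_le_sub_one_of_pos (by positivity : 0 < 1 + lam⁻¹ * s)]
  have hlog_mono : Real.log (1 + lam⁻¹ * s) ≤ Real.log (1 + lam⁻¹ * M) := by
    gcongr
  have hratio : s / (s + lam) = lam⁻¹ * s / (1 + lam⁻¹ * s) := by
    field_simp; ring
  rw [hratio, div_mul_eq_mul_div, le_div_iff₀ (by positivity)]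
  nlinarith [mul_le_mul_of_nonneg_left hlog_mono hx]

namespace Matrix.IsHermitian
variable {n 𝕜 : Type*} [RCLike 𝕜] [Fintype n] [DecidableEq n] {A : Matrix n n 𝕜}

lemma det_cfc (hA : A.IsHermitian) (f : ℝ → ℝ) :
    (cfc f A).det = ∏ i, (f (hA.eigenvalues i) : 𝕜) := by
  rw [hA.cfc_eq, IsHermitian.cfc, Unitary.conjStarAlgAut_apply, det_mul_comm, ← mul_assoc,
    Unitary.coe_star_mul_self, one_mul, det_diagonal]
  rfl

lemma trace_cfc (hA : A.IsHermitian) (f : ℝ → ℝ) :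
    (cfc f A).trace = ∑ i, (f (hA.eigenvalues i) : 𝕜) := by
  rw [hA.cfc_eq, IsHermitian.cfc, Unitary.conjStarAlgAut_apply, trace_mul_comm, ← mul_assoc,
    Unitary.coe_star_mul_self, one_mul, trace_diagonal]
  rfl

end Matrix.IsHermitian

namespace Matrix
variable {n : Type*} [Fintype n] [DecidableEq n] {A : Matrix n n ℝ}

lemma IsHermitian.eigenvalues_le_l2_opNorm (hA : A.IsHermitian) (i : n) :
    hA.eigenvalues i ≤ ‖A‖ := by
  have : Nonempty n := ⟨i⟩
  exact (le_abs_self _).trans (spectrum.norm_le_norm_of_mem (hA.eigenvalues_mem_spectrum_real i))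

lemma IsHermitian.one_add_smul_eq_cfc (hA : A.IsHermitian) (c : ℝ) :
    1 + c • A = cfc (fun x => 1 + c * x) A := by
  rw [cfc_const_add 1 _ A (ha := hA.isSelfAdjoint), cfc_const_mul_id c A hA.isSelfAdjoint, map_one]

lemma PosSemidef.mul_inv_add_smul_one_eq_cfc (hA : A.PosSemidef) {lam : ℝ}
    (hlam : 0 < lam) :
    A * (A + lam • 1)⁻¹ = cfc (fun x => x / (x + lam)) A := by
  have hsa := hA.isHermitian.isSelfAdjoint
  have hpos : ∀ x ∈ spectrum ℝ A, x + lam ≠ 0 := by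
    intro x hx
    obtain ⟨i, rfl⟩ := hA.isHermitian.spectrum_real_eq_range_eigenvalues ▸ hx
    exact (add_pos_of_nonneg_of_pos (hA.eigenvalues_nonneg i) hlam).ne'
  rw [cfc_map_div _ _ _ hpos (ha := hsa), cfc_add_const lam _ A (ha := hsa), cfc_id' ℝ A hsa,
    Algebra.algebraMap_eq_smul_one, nonsing_inv_eq_ringInverse]

end Matrix

/-- Log-determinant vs. effective dimension: for PSD `K` and `λ > 0`,
`log det (I + λ⁻¹ K) ≤ d_eff(λ) (1 + log(1 + λ⁻¹ ‖K‖_op))`, where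
`d_eff(λ) = tr (K (K + λI)⁻¹)` and `‖K‖_op` is the L2 operator norm of `K`. -/
theorem logdet_le_effective_dimension
    (T : ℕ) (K : Matrix (Fin T) (Fin T) ℝ) (hK : K.PosSemidef)
    (lam : ℝ) (hlam : 0 < lam) :
    Real.log (1 + lam⁻¹ • K).det ≤
      (K * (K + lam • 1)⁻¹).trace * (1 + Real.log (1 + lam⁻¹ * ‖K‖)) := by
  have hH := hK.isHermitian
  have hμ := hK.eigenvalues_nonneg
  rw [hH.one_add_smul_eq_cfc, hH.det_cfc, hK.mul_inv_add_smul_one_eq_cfc hlam, hH.trace_cfc,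
    Real.log_prod fun i _ => by have := hμ i; positivity, Finset.sum_mul]
  exact Finset.sum_le_sum fun i _ =>
    Real.log_one_add_inv_mul_le hlam (hμ i) (hH.eigenvalues_le_l2_opNorm i)
end

section
/- (Finite-dimensional log-determinant bound) Let n, T be positive integers, λ > 0, X > 0, and let g_1,…,g_T ∈ ℝ^n satisfy ‖g_t‖₂ ≤ X for all t. Let K_T = (⟨g_i, g_j⟩)_{i,j=1}^T ∈ ℝ^{T×T} be the Gram matrix. Then log det(I_T + λ^{-1} K_T) ≤ n · (1 + log(1 + T·X²/λ)). -/
/-!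
Writing the Gram matrix as `K = Aᵀ A` with `A` the `n × T` matrix of coordinates, the
Weinstein–Aronszajn identity gives `det (1 + λ⁻¹ K) = det (1 + λ⁻¹ A Aᵀ)`, a determinant of
size `n`. For a positive semidefinite `P` every eigenvalue is at most `tr P`, so
`det (1 + P) = ∏ (1 + μᵢ) ≤ (1 + tr P) ^ n`, and `tr (λ⁻¹ A Aᵀ) = λ⁻¹ ∑ ‖g_t‖² ≤ T X² / λ`.
-/

open scoped RealInnerProductSpace

namespace Matrix

variable {ι : Type*} [Fintype ι]

theorem gram_eq_transpose_mul {τ : Type*} (g : τ → EuclideanSpace ℝ ι) :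
    gram ℝ g = (of fun i t => g t i)ᵀ * of fun i t => g t i := by
  ext s t
  simp [mul_apply, PiLp.inner_apply, mul_comm]

theorem trace_gram {τ E : Type*} [Fintype τ] [NormedAddCommGroup E] [InnerProductSpace ℝ E]
    (g : τ → E) : (gram ℝ g).trace = ∑ t, ‖g t‖ ^ 2 := by
  simp [trace, gram]

variable [DecidableEq ι]

theorem IsHermitian.det_one_add_eq_prod {P : Matrix ι ι ℝ} (hP : P.IsHermitian) :
    (1 + P).det = ∏ i, (1 + hP.eigenvalues i) := by
  conv_lhs =>
    rw [hP.spectral_theorem, ← map_one (Unitary.conjStarAlgAut ℝ _ hP.eigenvectorUnitary),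
      ← map_add]
  rw [Unitary.conjStarAlgAut_apply, det_mul_comm, ← mul_assoc, Unitary.coe_star_mul_self, one_mul,
    ← diagonal_one, diagonal_add, det_diagonal]
  rfl

theorem PosSemidef.eigenvalues_le_trace {P : Matrix ι ι ℝ} (hP : P.PosSemidef) (i : ι) :
    hP.isHermitian.eigenvalues i ≤ P.trace := by
  rw [hP.isHermitian.trace_eq_sum_eigenvalues]
  exact Finset.single_le_sum (fun j _ => hP.eigenvalues_nonneg j) (Finset.mem_univ i)

theorem PosSemidef.log_det_one_add_le {P : Matrix ι ι ℝ} (hP : P.PosSemidef) :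
    Real.log (1 + P).det ≤ Fintype.card ι * Real.log (1 + P.trace) := by
  have hpos : ∀ i, 0 < 1 + hP.isHermitian.eigenvalues i := fun i => by
    linarith [hP.eigenvalues_nonneg i]
  rw [hP.isHermitian.det_one_add_eq_prod, Real.log_prod fun i _ => (hpos i).ne']
  calc ∑ i, Real.log (1 + hP.isHermitian.eigenvalues i)
      ≤ ∑ _i : ι, Real.log (1 + P.trace) := Finset.sum_le_sum fun i _ =>
        Real.log_le_log (hpos i) (by linarith [hP.eigenvalues_le_trace i])
    _ = Fintype.card ι * Real.log (1 + P.trace) := by simp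

theorem log_det_one_add_smul_gram_le {τ : Type*} [Fintype τ] [DecidableEq τ] {c : ℝ}
    (hc : 0 ≤ c) (g : τ → EuclideanSpace ℝ ι) :
    Real.log (1 + c • gram ℝ g).det ≤ Fintype.card ι * Real.log (1 + c * ∑ t, ‖g t‖ ^ 2) := by
  set A : Matrix ι τ ℝ := of fun i t => g t i
  have hdet : (1 + c • gram ℝ g).det = (1 + c • (A * Aᵀ)).det := by
    rw [gram_eq_transpose_mul, ← Matrix.mul_smul, det_one_add_mul_comm, smul_mul]
  have htrace : (c • (A * Aᵀ)).trace = c * ∑ t, ‖g t‖ ^ 2 := by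
    rw [trace_smul, trace_mul_comm, ← gram_eq_transpose_mul, trace_gram, smul_eq_mul]
  have hPSD : (c • (A * Aᵀ)).PosSemidef := by
    simpa using (posSemidef_self_mul_conjTranspose A).smul hc
  rw [hdet, ← htrace]
  exact hPSD.log_det_one_add_le

end Matrix

theorem finite_dim_logdet_bound_general
    (n T : ℕ)
    (lam X : ℝ) (hlam : 0 < lam)
    (g : Fin T → EuclideanSpace ℝ (Fin n)) (hg : ∀ t, ‖g t‖ ≤ X)
    (K : Matrix (Fin T) (Fin T) ℝ)
    (hK : ∀ i j, K i j = ⟪g i, g j⟫) :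
    Real.log (1 + lam⁻¹ • K).det ≤
      (n : ℝ) * (1 + Real.log (1 + (T : ℝ) * X ^ 2 / lam)) := by
  have hKgram : K = Matrix.gram ℝ g := Matrix.ext hK
  have hsum : ∑ t, ‖g t‖ ^ 2 ≤ T * X ^ 2 := by
    simpa using Finset.sum_le_card_nsmul Finset.univ _ _ fun t _ =>
      pow_le_pow_left₀ (norm_nonneg _) (hg t) 2
  calc Real.log (1 + lam⁻¹ • K).det
      ≤ n * Real.log (1 + lam⁻¹ * ∑ t, ‖g t‖ ^ 2) := by
        simpa [hKgram] using Matrix.log_det_one_add_smul_gram_le (inv_nonneg.2 hlam.le) g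
    _ ≤ n * Real.log (1 + T * X ^ 2 / lam) := by
        rw [inv_mul_eq_div]
        gcongr
    _ ≤ n * (1 + Real.log (1 + T * X ^ 2 / lam)) := by gcongr; linarith

/-- Finite-dimensional log-determinant bound: for `g_1,…,g_T ∈ ℝ^n` with `‖g_t‖₂ ≤ X`
and Gram matrix `K_T`, `log det (I_T + λ⁻¹ K_T) ≤ n (1 + log(1 + T X²/λ))`. -/
theorem finite_dim_logdet_bound
    (n T : ℕ) (hn : 0 < n) (hT : 0 < T)
    (lam X : ℝ) (hlam : 0 < lam) (hX : 0 < X)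
    (g : Fin T → EuclideanSpace ℝ (Fin n)) (hg : ∀ t, ‖g t‖ ≤ X)
    (K : Matrix (Fin T) (Fin T) ℝ)
    (hK : ∀ i j, K i j = ⟪g i, g j⟫) :
    Real.log (1 + lam⁻¹ • K).det ≤
      (n : ℝ) * (1 + Real.log (1 + (T : ℝ) * X ^ 2 / lam)) :=
  finite_dim_logdet_bound_general n T lam X hlam g hg K hK
end
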